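/- In the recurrent regime, for x₀ ≥ 1 the first hitting time τ_{x₀,0} of 0 satisfies E(u^{τ_{x₀,0}}) = z(u)^{x₀}·E(u^{τ_{0,0}}); hence τ_{x₀,0} is distributed as the independent sum τ_{0,0} + Σ_{k=1}^{x₀} τ_k, where (τ_k) are i.i.d. with p.g.f. z(u). In the positive recurrent case, E(τ_{x₀,0}) = (b₀x₀ + μ_δ)/(b₀(μ_δ - μ_β)). -/

import Mathlib

/-!
Conditioning on the first step, `F x = E u^{τ_{x,0}}` satisfies `F 0 = 1` and, for `x ≥ 1`,
`F x = u Σ_{d,e} P(δ = d) P(β = e) F((x - d)⁺ + e)`. For `u < 1` this discounted equation has a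
unique solution with values in `[0, 1]`, so it suffices to check that `H x = z(u)^x D(u)` solves
it, where `D(u)` is the claimed `E u^{τ_{0,0}}`. Writing `H y = D z^y + [y = 0] (1 - D)` factors
the right-hand side into geometric sums; the kernel equation `z - ᾱ = u α z φ_β(z)` cancels the
bulk terms, and `D(u)` is exactly what makes the boundary term match.

When `μ_β ≤ μ_δ`, the kernel equation gives `ᾱ (1 - z)^2 ≤ (1 - u) α`, so `z(u) → 1` and
`D(u) → 1` as `u → 1⁻`: the walk is recurrent and `τ_{x₀,0}` is almost surely finite. In the
positive recurrent case the same equation reads `(1 - u) α z φ_β(z) = (1 - z)(ᾱ - α z S(z))`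
with `S(z) = (1 - φ_β(z))/(1 - z) → μ_β`; this gives the limit of `(1 - E u^τ)/(1 - u)`, which
for a distribution on `ℕ` is the mean.
-/

open MeasureTheory ProbabilityTheory Set Filter Topology
open scoped ENNReal

theorem ENNReal.le_of_discounted_eq {ι κ : Type*} {c : ℝ≥0∞} {w : κ → ℝ≥0∞} {next : ι → κ → ι}
    {S : Set ι} {F G : ι → ℝ≥0∞} (hc : c < 1) (hw : ∑' k, w k ≤ 1) (hF : ∀ i, F i ≤ 1)
    (hFG : ∀ i ∉ S, F i ≤ G i) (hFS : ∀ i ∈ S, F i = c * ∑' k, w k * F (next i k))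
    (hGS : ∀ i ∈ S, G i = c * ∑' k, w k * G (next i k)) (i : ι) : F i ≤ G i := by
  have key : ∀ N i, F i ≤ G i + c ^ N := by
    intro N
    induction N with
    | zero => exact fun i => (hF i).trans (by rw [pow_zero]; exact le_add_self)
    | succ N ih =>
      intro i
      by_cases hi : i ∈ S
      · calc F i = c * ∑' k, w k * F (next i k) := hFS i hi
          _ ≤ c * ∑' k, w k * (G (next i k) + c ^ N) := by gcongr; exact ih _
          _ = G i + c * ((∑' k, w k) * c ^ N) := by
            simp only [mul_add, ENNReal.tsum_add, ENNReal.tsum_mul_right, hGS i hi]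
          _ ≤ G i + c * (1 * c ^ N) := by gcongr
          _ = G i + c ^ (N + 1) := by ring
      · exact (hFG i hi).trans le_self_add
  have hlim : Tendsto (fun N => G i + c ^ N) atTop (𝓝 (G i)) := by
    simpa using tendsto_const_nhds.add (ENNReal.tendsto_pow_atTop_nhds_zero_of_lt_one hc)
  exact ge_of_tendsto hlim (Eventually.of_forall fun N => key N i)

theorem ENNReal.eq_of_discounted_eq {ι κ : Type*} {c : ℝ≥0∞} {w : κ → ℝ≥0∞} {next : ι → κ → ι}
    {S : Set ι} {F G : ι → ℝ≥0∞} (hc : c < 1) (hw : ∑' k, w k ≤ 1) (hF : ∀ i, F i ≤ 1)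
    (hG : ∀ i, G i ≤ 1) (hFG : ∀ i ∉ S, F i = G i)
    (hFS : ∀ i ∈ S, F i = c * ∑' k, w k * F (next i k))
    (hGS : ∀ i ∈ S, G i = c * ∑' k, w k * G (next i k)) : F = G :=
  funext fun i => le_antisymm
    (ENNReal.le_of_discounted_eq hc hw hF (fun i hi => (hFG i hi).le) hFS hGS i)
    (ENNReal.le_of_discounted_eq hc hw hG (fun i hi => (hFG i hi).ge) hGS hFS i)

theorem mul_geom_sum_le {c z : ℝ} (hc : 0 ≤ c) (hz : z ∈ Icc (0 : ℝ) 1) (n : ℕ) :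
    c * ∑ j ∈ Finset.range n, z ^ j ≤ n * c := by
  calc c * ∑ j ∈ Finset.range n, z ^ j ≤ c * ∑ j ∈ Finset.range n, (1 : ℝ) := by
        gcongr with j; exact pow_le_one₀ hz.1 hz.2
    _ = n * c := by simp [mul_comm]

theorem hasSum_nat_mul_of_tendsto_one_sub_div {c : ℕ → ℝ} (hc : ∀ n, 0 ≤ c n) (hc1 : HasSum c 1)
    {L : ℝ} (hL : Tendsto (fun u => (1 - ∑' n, u ^ n * c n) / (1 - u)) (𝓝[<] 1) (𝓝 L)) :
    HasSum (fun n => n * c n) L := by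
  -- Abel summation with nonnegative terms: `∑ c n (1 + u + ⋯ + u ^ (n - 1))` increases to
  -- `∑ n c n` as `u → 1⁻`.
  have hR : ∀ u ∈ Ioo (0 : ℝ) 1, HasSum (fun n => c n * ∑ j ∈ Finset.range n, u ^ j)
      ((1 - ∑' n, u ^ n * c n) / (1 - u)) := by
    intro u hu
    have hs : Summable fun n => u ^ n * c n :=
      hc1.summable.of_nonneg_of_le (fun n => mul_nonneg (pow_nonneg hu.1.le n) (hc n))
        fun n => mul_le_of_le_one_left (hc n) (pow_le_one₀ hu.1.le hu.2.le)
    refine ((hc1.sub hs.hasSum).div_const (1 - u)).congr_fun fun n => ?_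
    rw [eq_div_iff (by linarith [hu.2])]
    linear_combination c n * geom_sum_mul_neg u n
  have hterm : ∀ u ∈ Ioo (0 : ℝ) 1, ∀ n : ℕ,
      0 ≤ c n * ∑ j ∈ Finset.range n, u ^ j ∧ c n * ∑ j ∈ Finset.range n, u ^ j ≤ n * c n :=
    fun u hu n => ⟨mul_nonneg (hc n) (Finset.sum_nonneg fun j _ => pow_nonneg hu.1.le j),
      mul_geom_sum_le (hc n) ⟨hu.1.le, hu.2.le⟩ n⟩
  have hpartial : ∀ N, ∑ n ∈ Finset.range N, n * c n ≤ L := by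
    intro N
    have hcont : Continuous fun u : ℝ => ∑ n ∈ Finset.range N, c n * ∑ j ∈ Finset.range n, u ^ j :=
      by fun_prop
    have hlim := (hcont.tendsto 1).mono_left (nhdsWithin_le_nhds (s := Iio 1))
    simp only [one_pow, Finset.sum_const, Finset.card_range, nsmul_eq_mul, mul_one] at hlim
    refine le_of_tendsto_of_tendsto (by simpa only [mul_comm] using hlim) hL ?_
    filter_upwards [Ioo_mem_nhdsLT one_pos] with u hu
    exact sum_le_hasSum _ (fun n _ => (hterm u hu n).1) (hR u hu)
  have hnonneg : ∀ n : ℕ, 0 ≤ n * c n := fun n => mul_nonneg n.cast_nonneg (hc n)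
  have hsum := summable_of_sum_range_le hnonneg hpartial
  have hle : L ≤ ∑' n : ℕ, n * c n := by
    refine le_of_tendsto hL ?_
    filter_upwards [Ioo_mem_nhdsLT one_pos] with u hu
    exact hasSum_le (fun n => (hterm u hu n).2) (hR u hu) hsum.hasSum
  exact le_antisymm (Real.tsum_le_of_sum_range_le hnonneg hpartial) hle ▸ hsum.hasSum

section NatValued

variable {Ω : Type*} [MeasurableSpace Ω] {μ : Measure Ω} {τ : Ω → ℕ}

theorem lintegral_comp_eq_tsum (hτ : Measurable τ) (f : ℕ → ℝ≥0∞) :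
    ∫⁻ ω, f (τ ω) ∂μ = ∑' n, f n * μ (τ ⁻¹' {n}) := by
  rw [← lintegral_map (measurable_of_countable f) hτ, lintegral_countable']
  exact tsum_congr fun n => by rw [Measure.map_apply hτ (measurableSet_singleton n)]

theorem integral_comp_of_hasSum [IsFiniteMeasure μ] (hτ : Measurable τ) {f : ℕ → ℝ}
    (hf : ∀ n, 0 ≤ f n) {s : ℝ} (hs : HasSum (fun n => f n * μ.real (τ ⁻¹' {n})) s) :
    ∫ ω, f (τ ω) ∂μ = s := by
  have hnn : ∀ n, 0 ≤ f n * μ.real (τ ⁻¹' {n}) := fun n => mul_nonneg (hf n) measureReal_nonneg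
  rw [integral_eq_lintegral_of_nonneg_ae (ae_of_all _ fun ω => hf _)
    ((measurable_of_countable f).comp hτ).aestronglyMeasurable,
    lintegral_comp_eq_tsum hτ fun n => ENNReal.ofReal (f n)]
  have hterm : ∀ n, ENNReal.ofReal (f n) * μ (τ ⁻¹' {n}) =
      ENNReal.ofReal (f n * μ.real (τ ⁻¹' {n})) := fun n => by
    rw [ENNReal.ofReal_mul (hf n), measureReal_def, ENNReal.ofReal_toReal (measure_ne_top _ _)]
  rw [tsum_congr hterm, ← ENNReal.ofReal_tsum_of_nonneg hnn hs.summable, hs.tsum_eq,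
    ENNReal.toReal_ofReal (hs.nonneg hnn)]

end NatValued

theorem Nat.sInf_eq_iff_of_ne_zero {s : Set ℕ} {n : ℕ} (hn : n ≠ 0) :
    sInf s = n ↔ n ∈ s ∧ ∀ k < n, k ∉ s := by
  constructor
  · rintro rfl
    exact ⟨Nat.sInf_mem (Nat.nonempty_of_pos_sInf (Nat.pos_of_ne_zero hn)),
      fun k hk => Nat.notMem_of_lt_sInf hk⟩
  · rintro ⟨hns, hlt⟩
    exact le_antisymm (Nat.sInf_le hns) (not_lt.1 fun h => hlt _ h (Nat.sInf_mem ⟨n, hns⟩))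

namespace DeathBirth

section Passage

def step (x : ℕ) (s : ℕ × ℕ) : ℕ := x - s.1 + s.2

def FirstPassage : (n : ℕ) → ℕ → (Fin n → ℕ × ℕ) → Prop
  | 0, x, _ => x = 0
  | n + 1, x, v => x ≠ 0 ∧ FirstPassage n (step x (v 0)) (Fin.tail v)

theorem firstPassage_iff {Y : ℕ → ℕ} {s : ℕ → ℕ × ℕ} (hY : ∀ k, Y (k + 1) = step (Y k) (s k))
    (n : ℕ) : FirstPassage n (Y 0) (fun i => s i) ↔ Y n = 0 ∧ ∀ k < n, Y k ≠ 0 := by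
  induction n generalizing Y s with
  | zero => simp [FirstPassage]
  | succ n ih =>
    have := ih (Y := fun k => Y (k + 1)) (s := fun k => s (k + 1)) (fun k => hY (k + 1))
    simp only [FirstPassage, Fin.val_zero, ← hY 0, Nat.forall_lt_succ_left]
    tauto

theorem firstPassage_cons {n x : ℕ} (s : ℕ × ℕ) (t : Fin n → ℕ × ℕ) :
    FirstPassage (n + 1) x (Fin.cons s t) ↔ x ≠ 0 ∧ FirstPassage n (step x s) t :=
  Iff.rfl

noncomputable def passageMass (w : ℕ × ℕ → ℝ≥0∞) : ℕ → ℕ → ℝ≥0∞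
  | x, 0 => if x = 0 then 1 else 0
  | x, n + 1 => if x = 0 then 0 else ∑' s, w s * passageMass w (step x s) n

variable {w : ℕ × ℕ → ℝ≥0∞}

theorem tsum_indicator_firstPassage (w : ℕ × ℕ → ℝ≥0∞) (n x : ℕ) :
    ∑' v : Fin n → ℕ × ℕ, {v | FirstPassage n x v}.indicator (fun v => ∏ i, w (v i)) v =
      passageMass w x n := by
  induction n generalizing x with
  | zero => by_cases hx : x = 0 <;> simp [FirstPassage, passageMass, hx]
  | succ n ih =>
    rw [← (Fin.consEquiv fun _ => ℕ × ℕ).tsum_eq, ENNReal.tsum_prod', passageMass]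
    by_cases hx : x = 0
    · simp [FirstPassage, hx]
    · rw [if_neg hx]
      refine tsum_congr fun s => ?_
      rw [← ih, ← ENNReal.tsum_mul_left]
      refine tsum_congr fun t => ?_
      have hcons : (Fin.consEquiv fun _ => ℕ × ℕ) (s, t) = Fin.cons s t := rfl
      rw [hcons]
      have hmem : (Fin.cons s t : Fin (n + 1) → ℕ × ℕ) ∈ {v | FirstPassage (n + 1) x v} ↔
          t ∈ {v | FirstPassage n (step x s) v} :=
        (firstPassage_cons s t).trans (and_iff_right hx)
      by_cases ht : t ∈ {v | FirstPassage n (step x s) v}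
      · rw [Set.indicator_of_mem (hmem.2 ht), Set.indicator_of_mem ht, Fin.prod_univ_succ,
          Fin.cons_zero]
        simp only [Fin.cons_succ]
      · rw [Set.indicator_of_notMem (mt hmem.1 ht), Set.indicator_of_notMem ht, mul_zero]

theorem passageMass_zero_right {x : ℕ} (hx : x ≠ 0) : passageMass w x 0 = 0 := by
  simp [passageMass, hx]

theorem tsum_passageMass_le_one (hw : ∑' s, w s ≤ 1) (x : ℕ) : ∑' n, passageMass w x n ≤ 1 := by
  suffices h : ∀ N x, ∑ n ∈ Finset.range N, passageMass w x n ≤ 1 from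
    ENNReal.tsum_eq_iSup_nat ▸ iSup_le fun N => h N x
  intro N
  induction N with
  | zero => simp
  | succ N ih =>
    intro x
    rw [Finset.sum_range_succ']
    by_cases hx : x = 0
    · simp [passageMass, hx]
    · calc ∑ n ∈ Finset.range N, passageMass w x (n + 1) + passageMass w x 0
          = ∑' s, w s * ∑ n ∈ Finset.range N, passageMass w (step x s) n := by
            simp only [passageMass, hx, if_false, add_zero, Finset.mul_sum]
            exact (Summable.tsum_finsetSum fun _ _ => ENNReal.summable).symm
        _ ≤ ∑' s, w s * 1 := by gcongr; exact ih _
        _ ≤ 1 := by simpa using hw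

noncomputable def passagePGF (w : ℕ × ℕ → ℝ≥0∞) (c : ℝ≥0∞) (x : ℕ) : ℝ≥0∞ :=
  ∑' n, c ^ n * passageMass w x n

theorem passagePGF_zero_right (c : ℝ≥0∞) : passagePGF w c 0 = 1 := by
  rw [passagePGF, tsum_eq_single 0 fun n hn => ?_]
  · simp [passageMass]
  · cases n with
    | zero => exact absurd rfl hn
    | succ n => simp [passageMass]

theorem passagePGF_of_ne_zero (c : ℝ≥0∞) {x : ℕ} (hx : x ≠ 0) :
    passagePGF w c x = c * ∑' s, w s * passagePGF w c (step x s) := by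
  rw [passagePGF, tsum_eq_zero_add' ENNReal.summable, passageMass_zero_right hx, mul_zero,
    zero_add, ← ENNReal.tsum_mul_left]
  simp only [passageMass, hx, if_false, ← ENNReal.tsum_mul_left]
  rw [ENNReal.tsum_comm]
  refine tsum_congr fun s => ?_
  rw [passagePGF, ← ENNReal.tsum_mul_left, ← ENNReal.tsum_mul_left]
  exact tsum_congr fun n => by ring

theorem passagePGF_le_tsum {c : ℝ≥0∞} (hc : c ≤ 1) (x : ℕ) :
    passagePGF w c x ≤ ∑' n, passageMass w x n :=
  ENNReal.tsum_le_tsum fun n => mul_le_of_le_one_left' (pow_le_one' hc n)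

theorem toReal_passagePGF (hw : ∑' s, w s ≤ 1) {u : ℝ} (hu : 0 ≤ u) (x : ℕ) :
    (passagePGF w (ENNReal.ofReal u) x).toReal = ∑' n, u ^ n * (passageMass w x n).toReal := by
  have hfin : ∀ n, passageMass w x n ≠ ⊤ := fun n => ne_top_of_le_ne_top ENNReal.one_ne_top
    ((ENNReal.le_tsum n).trans (tsum_passageMass_le_one hw x))
  rw [passagePGF, ENNReal.tsum_toReal_eq fun n => ENNReal.mul_ne_top (by simp) (hfin n)]
  simp [ENNReal.toReal_mul, hu]

end Passage

noncomputable def pgf (b : ℕ → ℝ) (z : ℝ) : ℝ := ∑' n, b n * z ^ n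

/-- The difference quotient `(1 - pgf b z) / (1 - z)`, as a series that also makes sense at
`z = 1`, where it is the mean of `b`. -/
noncomputable def pgfSlope (b : ℕ → ℝ) (z : ℝ) : ℝ := ∑' n, b n * ∑ j ∈ Finset.range n, z ^ j

section PGF

variable {b : ℕ → ℝ} {m z : ℝ}

theorem summable_mul_pow (hb : ∀ n, 0 ≤ b n) (hb1 : Summable b) (hz : z ∈ Icc (0 : ℝ) 1) :
    Summable fun n => b n * z ^ n :=
  hb1.of_nonneg_of_le (fun n => mul_nonneg (hb n) (pow_nonneg hz.1 n))
    fun n => mul_le_of_le_one_right (hb n) (pow_le_one₀ hz.1 hz.2)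

theorem pgf_nonneg (hb : ∀ n, 0 ≤ b n) (hz : 0 ≤ z) : 0 ≤ pgf b z :=
  tsum_nonneg fun n => mul_nonneg (hb n) (pow_nonneg hz n)

theorem pgf_le_one (hb : ∀ n, 0 ≤ b n) (hb1 : HasSum b 1) (hz : z ∈ Icc (0 : ℝ) 1) :
    pgf b z ≤ 1 :=
  hasSum_le (fun n => mul_le_of_le_one_right (hb n) (pow_le_one₀ hz.1 hz.2))
    (summable_mul_pow hb hb1.summable hz).hasSum hb1

theorem pgf_one (hb1 : HasSum b 1) : pgf b 1 = 1 := by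
  simpa [pgf] using hb1.tsum_eq

theorem summable_mul_geom_sum (hb : ∀ n, 0 ≤ b n) (hμ : HasSum (fun n => n * b n) m)
    (hz : z ∈ Icc (0 : ℝ) 1) : Summable fun n => b n * ∑ j ∈ Finset.range n, z ^ j :=
  hμ.summable.of_nonneg_of_le
    (fun n => mul_nonneg (hb n) (Finset.sum_nonneg fun j _ => pow_nonneg hz.1 j))
    fun n => mul_geom_sum_le (hb n) hz n

theorem pgfSlope_nonneg (hb : ∀ n, 0 ≤ b n) (hz : 0 ≤ z) : 0 ≤ pgfSlope b z :=
  tsum_nonneg fun n => mul_nonneg (hb n) (Finset.sum_nonneg fun j _ => pow_nonneg hz j)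

theorem pgfSlope_le (hb : ∀ n, 0 ≤ b n) (hμ : HasSum (fun n => n * b n) m)
    (hz : z ∈ Icc (0 : ℝ) 1) : pgfSlope b z ≤ m :=
  hasSum_le (fun n => mul_geom_sum_le (hb n) hz n) (summable_mul_geom_sum hb hμ hz).hasSum hμ

theorem one_sub_mul_pgfSlope (hb : ∀ n, 0 ≤ b n) (hb1 : HasSum b 1) (hz : z ∈ Icc (0 : ℝ) 1) :
    (1 - z) * pgfSlope b z = 1 - pgf b z := by
  have h := hb1.sub (summable_mul_pow hb hb1.summable hz).hasSum
  rw [pgfSlope, ← tsum_mul_left]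
  refine (h.congr_fun fun n => ?_).tsum_eq
  rw [mul_left_comm, mul_comm (1 - z), geom_sum_mul_neg]
  ring

theorem tendsto_pgf (hb : ∀ n, 0 ≤ b n) (hb1 : HasSum b 1) :
    Tendsto (pgf b) (𝓝[Icc 0 1] 1) (𝓝 1) := by
  have h := tendsto_tsum_of_dominated_convergence (𝓕 := 𝓝[Icc 0 1] 1)
    (f := fun z n => b n * z ^ n) (g := b) hb1.summable (fun n => ?_) ?_
  · rwa [hb1.tsum_eq] at h
  · simpa using (((continuous_pow n).const_mul (b n)).tendsto 1).mono_left nhdsWithin_le_nhds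
  · filter_upwards [self_mem_nhdsWithin] with z hz n
    rw [Real.norm_of_nonneg (mul_nonneg (hb n) (pow_nonneg hz.1 n))]
    exact mul_le_of_le_one_right (hb n) (pow_le_one₀ hz.1 hz.2)

theorem tendsto_pgfSlope (hb : ∀ n, 0 ≤ b n) (hμ : HasSum (fun n => n * b n) m) :
    Tendsto (pgfSlope b) (𝓝[Icc 0 1] 1) (𝓝 m) := by
  have h := tendsto_tsum_of_dominated_convergence (𝓕 := 𝓝[Icc 0 1] 1)
    (f := fun z n => b n * ∑ j ∈ Finset.range n, z ^ j) (g := fun n => n * b n) hμ.summable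
    (fun n => ?_) ?_
  · rwa [hμ.tsum_eq] at h
  · have hc : Continuous fun z : ℝ => b n * ∑ j ∈ Finset.range n, z ^ j := by fun_prop
    simpa [mul_comm] using (hc.tendsto 1).mono_left nhdsWithin_le_nhds
  · filter_upwards [self_mem_nhdsWithin] with z hz n
    rw [Real.norm_of_nonneg
      (mul_nonneg (hb n) (Finset.sum_nonneg fun j _ => pow_nonneg hz.1 j))]
    exact mul_geom_sum_le (hb n) hz n

end PGF

def SolvesKernelEquation (α : ℝ) (b : ℕ → ℝ) (zf : ℝ → ℝ) : Prop :=
  ∀ u ∈ Icc (0 : ℝ) 1, zf u ∈ Icc (1 - α) 1 ∧ zf u - (1 - α) = u * (α * zf u * pgf b (zf u))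

section Root

variable {b : ℕ → ℝ} {m α u z : ℝ}

theorem one_sub_mul_eq_of_root (hb : ∀ n, 0 ≤ b n) (hb1 : HasSum b 1) (hz : z ∈ Icc (0 : ℝ) 1)
    (heq : z - (1 - α) = u * (α * z * pgf b z)) :
    (1 - u) * (α * z * pgf b z) = (1 - z) * (1 - α - α * z * pgfSlope b z) := by
  linear_combination heq + α * z * one_sub_mul_pgfSlope hb hb1 hz

theorem sq_one_sub_root_le (hb : ∀ n, 0 ≤ b n) (hb1 : HasSum b 1)
    (hμ : HasSum (fun n => n * b n) m) (hα0 : 0 < α) (hαm : α * m ≤ 1 - α) (hu1 : u ≤ 1)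
    (hz : z ∈ Icc (0 : ℝ) 1) (heq : z - (1 - α) = u * (α * z * pgf b z)) :
    (1 - α) * (1 - z) ^ 2 ≤ (1 - u) * α := by
  have hzT : α * z * pgfSlope b z ≤ (1 - α) * z := by
    nlinarith [mul_le_mul_of_nonneg_left (pgfSlope_le hb hμ hz) (mul_nonneg hα0.le hz.1),
      mul_le_mul_of_nonneg_right hαm hz.1]
  have hzφ : α * z * pgf b z ≤ α := by
    rw [mul_assoc]
    exact mul_le_of_le_one_right hα0.le
      (mul_le_one₀ hz.2 (pgf_nonneg hb hz.1) (pgf_le_one hb hb1 hz))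
  calc (1 - α) * (1 - z) ^ 2 = (1 - z) * (1 - α - (1 - α) * z) := by ring
    _ ≤ (1 - z) * (1 - α - α * z * pgfSlope b z) := by gcongr; linarith [hz.2]
    _ = (1 - u) * (α * z * pgf b z) := (one_sub_mul_eq_of_root hb hb1 hz heq).symm
    _ ≤ (1 - u) * α := by gcongr

theorem root_lt_one (hb1 : HasSum b 1) (hα0 : 0 < α) (hu1 : u < 1) (hz1 : z ≤ 1)
    (heq : z - (1 - α) = u * (α * z * pgf b z)) : z < 1 := by
  refine hz1.lt_of_ne fun h => ?_
  rw [h, pgf_one hb1] at heq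
  nlinarith

variable {zf : ℝ → ℝ}

theorem tendsto_root (hb : ∀ n, 0 ≤ b n) (hb1 : HasSum b 1)
    (hμ : HasSum (fun n => n * b n) m) (hα0 : 0 < α) (hα1 : α < 1) (hαm : α * m ≤ 1 - α)
    (hzf : SolvesKernelEquation α b zf) :
    Tendsto zf (𝓝[<] 1) (𝓝[Icc 0 1] 1) := by
  have hIoo : ∀ᶠ u in 𝓝[<] (1 : ℝ), u ∈ Ioo 0 1 := Ioo_mem_nhdsLT one_pos
  have hzIcc : ∀ᶠ u in 𝓝[<] (1 : ℝ), zf u ∈ Icc (0 : ℝ) 1 := hIoo.mono fun u hu =>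
    ⟨by linarith [(hzf u ⟨hu.1.le, hu.2.le⟩).1.1], (hzf u ⟨hu.1.le, hu.2.le⟩).1.2⟩
  refine tendsto_nhdsWithin_iff.2 ⟨?_, hzIcc⟩
  have hsqrt : Tendsto (fun u => √(α / (1 - α) * (1 - u))) (𝓝[<] 1) (𝓝 0) := by
    have hc : Continuous fun u : ℝ => √(α / (1 - α) * (1 - u)) := by fun_prop
    simpa using (hc.tendsto 1).mono_left nhdsWithin_le_nhds
  have hgap : Tendsto (fun u => 1 - zf u) (𝓝[<] 1) (𝓝 0) := by
    refine squeeze_zero' (hzIcc.mono fun u hu => sub_nonneg.2 hu.2) ?_ hsqrt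
    filter_upwards [hIoo, hzIcc] with u hu hz
    have h := sq_one_sub_root_le hb hb1 hμ hα0 hαm hu.2.le hz (hzf u ⟨hu.1.le, hu.2.le⟩).2
    refine Real.le_sqrt_of_sq_le ?_
    rw [div_mul_eq_mul_div, le_div_iff₀ (by linarith)]
    linarith
  simpa using (tendsto_const_nhds (x := (1 : ℝ))).sub hgap

theorem tendsto_one_sub_root_div (hb : ∀ n, 0 ≤ b n) (hb1 : HasSum b 1)
    (hμ : HasSum (fun n => n * b n) m) (hα0 : 0 < α) (hα1 : α < 1) (hαm : α * m < 1 - α)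
    (hzf : SolvesKernelEquation α b zf) :
    Tendsto (fun u => (1 - zf u) / (1 - u)) (𝓝[<] 1) (𝓝 (α / (1 - α - α * m))) := by
  have hz := tendsto_root hb hb1 hμ hα0 hα1 hαm.le hzf
  have hz' := hz.mono_right nhdsWithin_le_nhds
  have hlim : Tendsto (fun u => α * zf u * pgf b (zf u) / (1 - α - α * zf u * pgfSlope b (zf u)))
      (𝓝[<] 1) (𝓝 (α * 1 * 1 / (1 - α - α * 1 * m))) :=
    ((tendsto_const_nhds.mul hz').mul ((tendsto_pgf hb hb1).comp hz)).div
      (tendsto_const_nhds.sub ((tendsto_const_nhds.mul hz').mul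
        ((tendsto_pgfSlope hb hμ).comp hz))) (by linarith)
  simp only [mul_one] at hlim
  refine hlim.congr' ?_
  filter_upwards [Ioo_mem_nhdsLT one_pos] with u hu
  obtain ⟨hzu, heq⟩ := hzf u ⟨hu.1.le, hu.2.le⟩
  have hz01 : zf u ∈ Icc (0 : ℝ) 1 := ⟨by linarith [hzu.1], hzu.2⟩
  have hden : 0 < 1 - α - α * zf u * pgfSlope b (zf u) := by
    nlinarith [pgfSlope_le hb hμ hz01, pgfSlope_nonneg hb hz01.1,
      mul_le_mul_of_nonneg_left hz01.2 (mul_nonneg hα0.le (pgfSlope_nonneg hb hz01.1))]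
  rw [div_eq_div_iff hden.ne' (by linarith [hu.2])]
  linear_combination one_sub_mul_eq_of_root hb hb1 hz01 heq

theorem root_eq_one (hb : ∀ n, 0 ≤ b n) (hb1 : HasSum b 1)
    (hμ : HasSum (fun n => n * b n) m) (hα0 : 0 < α) (hα1 : α < 1) (hαm : α * m ≤ 1 - α)
    (hz : z ∈ Icc (0 : ℝ) 1) (heq : z - (1 - α) = 1 * (α * z * pgf b z)) : z = 1 := by
  have h := sq_one_sub_root_le hb hb1 hμ hα0 hαm le_rfl hz heq
  rw [sub_self, zero_mul] at h
  have h2 : (1 - z) ^ 2 = 0 :=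
    le_antisymm (nonpos_of_mul_nonpos_right h (sub_pos.2 hα1)) (sq_nonneg _)
  linarith [pow_eq_zero_iff two_ne_zero |>.1 h2]

end Root

section Geometric

variable {α : ℝ}

theorem hasSum_geometric_shift (hα0 : 0 < α) (hα1 : α < 1) (x : ℕ) :
    HasSum (fun d => α * (1 - α) ^ (d + x)) ((1 - α) ^ x) := by
  have h := (hasSum_geometric_of_lt_one (by linarith) (by linarith : 1 - α < 1)).mul_left
    (α * (1 - α) ^ x)
  rw [sub_sub_cancel, mul_right_comm, mul_inv_cancel₀ hα0.ne', one_mul] at h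
  exact h.congr_fun fun d => by ring

theorem hasSum_geometric_indicator_le (hα0 : 0 < α) (hα1 : α < 1) (x : ℕ) :
    HasSum (fun d => if x ≤ d then α * (1 - α) ^ d else 0) ((1 - α) ^ x) := by
  rw [← hasSum_nat_add_iff' x, Finset.sum_eq_zero fun i hi => if_neg (by simpa using hi),
    sub_zero]
  simpa using hasSum_geometric_shift hα0 hα1 x

theorem hasSum_geometric_mul_pow_tsub (hα0 : 0 < α) (hα1 : α < 1) (z : ℝ) (x : ℕ) :
    HasSum (fun d => α * (1 - α) ^ d * z ^ (x - d))
      (α * ∑ i ∈ Finset.range x, (1 - α) ^ i * z ^ (x - i) + (1 - α) ^ x) := by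
  refine (hasSum_nat_add_iff' x).1 ?_
  have hval : α * ∑ i ∈ Finset.range x, (1 - α) ^ i * z ^ (x - i) + (1 - α) ^ x -
      ∑ i ∈ Finset.range x, α * (1 - α) ^ i * z ^ (x - i) = (1 - α) ^ x := by
    rw [Finset.mul_sum]; simp only [mul_assoc]; ring
  rw [hval]
  exact (hasSum_geometric_shift hα0 hα1 x).congr_fun fun d => by simp

theorem sub_mul_sum_pow_mul_pow_tsub (a z : ℝ) (x : ℕ) :
    (z - a) * ∑ i ∈ Finset.range x, a ^ i * z ^ (x - i) = z * (z ^ x - a ^ x) := by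
  have h : ∑ i ∈ Finset.range x, a ^ i * z ^ (x - i) =
      z * ∑ i ∈ Finset.range x, a ^ i * z ^ (x - 1 - i) := by
    rw [Finset.mul_sum]
    refine Finset.sum_congr rfl fun i hi => ?_
    rw [show x - i = x - 1 - i + 1 by simp at hi; omega, pow_succ]
    ring
  rw [h]
  linear_combination (-z) * geom_sum₂_mul a z x

end Geometric

/-- The paper's `E(u^{τ_{0,0}})`, at `z = z(u)`. -/
noncomputable def returnPGF (α b₀ u z : ℝ) : ℝ :=
  α * b₀ * u * z / (α * b₀ * u * z + (1 - α) * (1 - z))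

noncomputable def hittingPGF (α b₀ u z : ℝ) (x : ℕ) : ℝ :=
  if x = 0 then 1 else z ^ x * returnPGF α b₀ u z

section HittingPGF

variable {α b₀ u z : ℝ} {b : ℕ → ℝ}

theorem returnPGF_denom_pos (hα0 : 0 ≤ α) (hα1 : α < 1) (hb₀ : 0 ≤ b₀) (hu : 0 ≤ u)
    (hz0 : 0 ≤ z) (hz1 : z < 1) : 0 < α * b₀ * u * z + (1 - α) * (1 - z) := by
  have : 0 < (1 - α) * (1 - z) := mul_pos (by linarith) (by linarith)
  positivity

theorem hittingPGF_mem_Icc (hα0 : 0 ≤ α) (hα1 : α < 1) (hb₀ : 0 ≤ b₀) (hu : 0 ≤ u)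
    (hz0 : 0 ≤ z) (hz1 : z < 1) (x : ℕ) : hittingPGF α b₀ u z x ∈ Icc (0 : ℝ) 1 := by
  have hden := returnPGF_denom_pos hα0 hα1 hb₀ hu hz0 hz1
  have hD : returnPGF α b₀ u z ∈ Icc (0 : ℝ) 1 := by
    rw [returnPGF, Set.mem_Icc, div_le_one hden]
    exact ⟨by positivity, by nlinarith⟩
  unfold hittingPGF
  split_ifs
  · simp
  · exact ⟨by have := hD.1; positivity, mul_le_one₀ (pow_le_one₀ hz0 hz1.le) hD.1 hD.2⟩

theorem hasSum_mul_ite_step (hα0 : 0 < α) (hα1 : α < 1) (hb : ∀ n, 0 ≤ b n)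
    (hb1 : HasSum b 1) (hz : z ∈ Icc (0 : ℝ) 1) (D : ℝ) (x : ℕ) :
    HasSum (fun s : ℕ × ℕ => α * (1 - α) ^ s.1 * b s.2 *
        (if step x s = 0 then 1 else z ^ step x s * D))
      (D * ((α * ∑ i ∈ Finset.range x, (1 - α) ^ i * z ^ (x - i) + (1 - α) ^ x) * pgf b z) +
        (1 - D) * ((1 - α) ^ x * b 0)) := by
  have hgeo : ∀ d, 0 ≤ α * (1 - α) ^ d := fun d => mul_nonneg hα0.le (pow_nonneg (by linarith) d)
  have hA := hasSum_geometric_mul_pow_tsub hα0 hα1 z x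
  have hB := (summable_mul_pow hb hb1.summable hz).hasSum
  have hT := hasSum_geometric_indicator_le hα0 hα1 x
  have hE := hasSum_ite_eq 0 (b 0)
  have hAB := hA.summable.mul_of_nonneg hB.summable
    (fun d => mul_nonneg (hgeo d) (pow_nonneg hz.1 _))
    fun e => mul_nonneg (hb e) (pow_nonneg hz.1 e)
  have hTE := hT.summable.mul_of_nonneg hE.summable (fun d => ite_nonneg (hgeo d) le_rfl)
    fun _ => ite_nonneg (hb 0) le_rfl
  -- `if y = 0 then 1 else z ^ y * D = D * z ^ y + (if y = 0 then 1 - D else 0)`, and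
  -- `x - d + e = 0` iff `x ≤ d ∧ e = 0`: both parts are products of a term in `d` and one in `e`.
  refine (((hA.mul hB hAB).mul_left D).add ((hT.mul hE hTE).mul_left (1 - D))).congr_fun
    fun s => ?_
  obtain ⟨d, e⟩ := s
  simp only [step]
  by_cases hd : x ≤ d <;> by_cases he : e = 0
  · simp [hd, he, Nat.sub_eq_zero_of_le hd]; ring
  · simp [hd, he, Nat.sub_eq_zero_of_le hd]; ring
  · simp [hd, he, show x - d ≠ 0 by omega]; ring
  · simp [hd, he, pow_add]; ring

theorem hittingPGF_eq_mul_tsum (hα0 : 0 < α) (hα1 : α < 1) (hb : ∀ n, 0 ≤ b n)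
    (hb1 : HasSum b 1) (hb0 : 0 < b 0) (hu : 0 ≤ u) (hz : z ∈ Icc (0 : ℝ) 1) (hz1 : z < 1)
    (heq : z - (1 - α) = u * (α * z * pgf b z)) {x : ℕ} (hx : x ≠ 0) :
    hittingPGF α (b 0) u z x =
      u * ∑' s : ℕ × ℕ, α * (1 - α) ^ s.1 * b s.2 * hittingPGF α (b 0) u z (step x s) := by
  have hden := returnPGF_denom_pos hα0.le hα1 hb0.le hu hz.1 hz1
  have hQ := sub_mul_sum_pow_mul_pow_tsub (1 - α) z x
  have hS : HasSum (fun s : ℕ × ℕ => α * (1 - α) ^ s.1 * b s.2 *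
      hittingPGF α (b 0) u z (step x s)) _ :=
    hasSum_mul_ite_step hα0 hα1 hb hb1 hz (returnPGF α (b 0) u z) x
  rw [hS.tsum_eq, hittingPGF, if_neg hx, returnPGF]
  field_simp
  linear_combination (u * (α * ∑ i ∈ Finset.range x, (1 - α) ^ i * z ^ (x - i) +
    (1 - α) ^ x)) * heq - u * α * hQ

theorem one_sub_pow_mul_returnPGF (hden : α * b₀ * u * z + (1 - α) * (1 - z) ≠ 0) (x : ℕ) :
    1 - z ^ x * returnPGF α b₀ u z = (1 - z) * (∑ i ∈ Finset.range x, z ^ i +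
      z ^ x * ((1 - α) / (α * b₀ * u * z + (1 - α) * (1 - z)))) := by
  have h : (1 - α) * (1 - z) / (α * b₀ * u * z + (1 - α) * (1 - z)) = 1 - returnPGF α b₀ u z := by
    rw [returnPGF, eq_sub_iff_add_eq, ← add_div, div_eq_one_iff_eq hden]
    ring
  linear_combination -geom_sum_mul_neg z x - z ^ x * h

end HittingPGF

section Limits

variable {α b₀ m : ℝ} {b : ℕ → ℝ} {zf : ℝ → ℝ}

theorem tendsto_returnPGF_num (hz : Tendsto zf (𝓝[<] 1) (𝓝 1)) :
    Tendsto (fun u => α * b₀ * u * zf u) (𝓝[<] 1) (𝓝 (α * b₀)) := by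
  have hu : Tendsto (fun u : ℝ => u) (𝓝[<] 1) (𝓝 1) := tendsto_id.mono_left nhdsWithin_le_nhds
  simpa using (hu.const_mul (α * b₀)).mul hz

theorem tendsto_returnPGF_denom (hz : Tendsto zf (𝓝[<] 1) (𝓝 1)) :
    Tendsto (fun u => α * b₀ * u * zf u + (1 - α) * (1 - zf u)) (𝓝[<] 1) (𝓝 (α * b₀)) := by
  simpa using (tendsto_returnPGF_num hz).add
    (((tendsto_const_nhds (x := (1 : ℝ))).sub hz).const_mul (1 - α))

theorem tendsto_hittingPGF (hα0 : 0 < α) (hb₀ : 0 < b₀) (hz : Tendsto zf (𝓝[<] 1) (𝓝 1))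
    (x : ℕ) : Tendsto (fun u => hittingPGF α b₀ u (zf u) x) (𝓝[<] 1) (𝓝 1) := by
  have hD := (tendsto_returnPGF_num (α := α) (b₀ := b₀) hz).div
    (tendsto_returnPGF_denom (α := α) (b₀ := b₀) hz) (by positivity)
  rw [div_self (by positivity)] at hD
  by_cases hx : x = 0
  · simp [hittingPGF, hx]
  · simpa [hittingPGF, hx, returnPGF] using (hz.pow x).mul hD

theorem tendsto_one_sub_hittingPGF_div (hb : ∀ n, 0 ≤ b n) (hb1 : HasSum b 1)
    (hμ : HasSum (fun n => n * b n) m) (hα0 : 0 < α) (hα1 : α < 1) (hαm : α * m < 1 - α)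
    (hb0 : 0 < b 0) (hzf : SolvesKernelEquation α b zf) {x : ℕ} (hx : x ≠ 0) :
    Tendsto (fun u => (1 - hittingPGF α (b 0) u (zf u) x) / (1 - u)) (𝓝[<] 1)
      (𝓝 ((b 0 * x + (1 - α) / α) / (b 0 * ((1 - α) / α - m)))) := by
  have hz := (tendsto_root hb hb1 hμ hα0 hα1 hαm.le hzf).mono_right nhdsWithin_le_nhds
  have hgeom : Tendsto (fun u => ∑ i ∈ Finset.range x, zf u ^ i) (𝓝[<] 1) (𝓝 x) := by
    simpa using tendsto_finsetSum (Finset.range x) fun i _ => hz.pow i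
  have hlim := (tendsto_one_sub_root_div hb hb1 hμ hα0 hα1 hαm hzf).mul (hgeom.add
    ((hz.pow x).mul ((tendsto_const_nhds (x := 1 - α)).div
      (tendsto_returnPGF_denom (α := α) (b₀ := b 0) hz) (by positivity))))
  have hval : α / (1 - α - α * m) * (x + 1 ^ x * ((1 - α) / (α * b 0))) =
      (b 0 * x + (1 - α) / α) / (b 0 * ((1 - α) / α - m)) := by
    have : 1 - α - α * m ≠ 0 := by linarith
    have : (1 - α) / α - m ≠ 0 := by
      rw [sub_ne_zero, ne_comm, ne_eq, eq_div_iff hα0.ne']; linarith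
    field_simp
    ring
  rw [hval] at hlim
  refine hlim.congr' ?_
  filter_upwards [Ioo_mem_nhdsLT one_pos] with u hu
  obtain ⟨hzu, heq⟩ := hzf u ⟨hu.1.le, hu.2.le⟩
  have hz1 := root_lt_one hb1 hα0 hu.2 hzu.2 heq
  have hden := returnPGF_denom_pos hα0.le hα1 hb0.le hu.1.le (by linarith [hzu.1]) hz1
  rw [hittingPGF, if_neg hx, one_sub_pow_mul_returnPGF hden.ne' x, Pi.div_apply]
  ring

end Limits

noncomputable def stepLaw (α : ℝ) (b : ℕ → ℝ) (s : ℕ × ℕ) : ℝ≥0∞ :=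
  ENNReal.ofReal (α * (1 - α) ^ s.1) * ENNReal.ofReal (b s.2)


section FirstPassageLaw

variable {α u z m : ℝ} {b : ℕ → ℝ} {zf : ℝ → ℝ}

theorem tsum_stepLaw (hα0 : 0 < α) (hα1 : α < 1) (hb : ∀ n, 0 ≤ b n) (hb1 : HasSum b 1) :
    ∑' s, stepLaw α b s = 1 := by
  have hgeo : ∀ d, 0 ≤ α * (1 - α) ^ d := fun d => mul_nonneg hα0.le (pow_nonneg (by linarith) d)
  have hG : HasSum (fun d => α * (1 - α) ^ d) 1 := by
    simpa using hasSum_geometric_shift hα0 hα1 0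
  have h := hG.mul hb1 (hG.summable.mul_of_nonneg hb1.summable hgeo hb)
  rw [one_mul] at h
  simp_rw [stepLaw, ← ENNReal.ofReal_mul (hgeo _)]
  rw [← ENNReal.ofReal_tsum_of_nonneg (fun s => mul_nonneg (hgeo _) (hb _)) h.summable, h.tsum_eq,
    ENNReal.ofReal_one]

theorem passagePGF_stepLaw (hα0 : 0 < α) (hα1 : α < 1) (hb : ∀ n, 0 ≤ b n) (hb1 : HasSum b 1)
    (hb0 : 0 < b 0) (hu0 : 0 ≤ u) (hu1 : u < 1) (hz : z ∈ Icc (0 : ℝ) 1)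
    (heq : z - (1 - α) = u * (α * z * pgf b z)) (x : ℕ) :
    passagePGF (stepLaw α b) (ENNReal.ofReal u) x = ENNReal.ofReal (hittingPGF α (b 0) u z x) := by
  have hz1 := root_lt_one hb1 hα0 hu1 hz.2 heq
  have hw := tsum_stepLaw hα0 hα1 hb hb1
  have hH := hittingPGF_mem_Icc hα0.le hα1 hb0.le hu0 hz.1 hz1
  refine congrFun (ENNReal.eq_of_discounted_eq (S := {x | x ≠ 0}) (next := step)
    (ENNReal.ofReal_lt_one.2 hu1) hw.le
    (fun x => (passagePGF_le_tsum (ENNReal.ofReal_le_one.2 hu1.le) x).trans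
      (tsum_passageMass_le_one hw.le x))
    (fun x => ENNReal.ofReal_le_one.2 (hH x).2) (fun x hx => ?_)
    (fun x hx => passagePGF_of_ne_zero _ hx) (fun x hx => ?_)) x
  · obtain rfl : x = 0 := not_not.1 hx
    simp [passagePGF_zero_right, hittingPGF]
  · have hS : Summable fun s : ℕ × ℕ =>
        α * (1 - α) ^ s.1 * b s.2 * hittingPGF α (b 0) u z (step x s) :=
      (hasSum_mul_ite_step hα0 hα1 hb hb1 hz (returnPGF α (b 0) u z) x).summable
    have hgeo : ∀ d, 0 ≤ α * (1 - α) ^ d := fun d =>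
      mul_nonneg hα0.le (pow_nonneg (by linarith) d)
    rw [hittingPGF_eq_mul_tsum hα0 hα1 hb hb1 hb0 hu0 hz hz1 heq hx, ENNReal.ofReal_mul hu0,
      ENNReal.ofReal_tsum_of_nonneg (fun s => mul_nonneg (mul_nonneg (hgeo _) (hb _)) (hH _).1) hS]
    congr 1
    refine tsum_congr fun s => ?_
    rw [stepLaw, ENNReal.ofReal_mul (mul_nonneg (hgeo _) (hb _)), ENNReal.ofReal_mul (hgeo _)]

theorem tsum_passageMass_stepLaw_eq_one (hb : ∀ n, 0 ≤ b n) (hb1 : HasSum b 1)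
    (hμ : HasSum (fun n => n * b n) m) (hα0 : 0 < α) (hα1 : α < 1) (hαm : α * m ≤ 1 - α)
    (hb0 : 0 < b 0) (hzf : SolvesKernelEquation α b zf) (x : ℕ) :
    ∑' n, passageMass (stepLaw α b) x n = 1 := by
  refine le_antisymm (tsum_passageMass_le_one (tsum_stepLaw hα0 hα1 hb hb1).le x) ?_
  have hz := (tendsto_root hb hb1 hμ hα0 hα1 hαm hzf).mono_right nhdsWithin_le_nhds
  have h := ENNReal.tendsto_ofReal (tendsto_hittingPGF hα0 hb0 hz x)
  rw [ENNReal.ofReal_one] at h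
  refine le_of_tendsto h ?_
  filter_upwards [Ioo_mem_nhdsLT one_pos] with u hu
  obtain ⟨hzu, heq⟩ := hzf u ⟨hu.1.le, hu.2.le⟩
  rw [← passagePGF_stepLaw hα0 hα1 hb hb1 hb0 hu.1.le hu.2 ⟨by linarith [hzu.1], hzu.2⟩ heq x]
  exact passagePGF_le_tsum (ENNReal.ofReal_le_one.2 hu.2.le) x

theorem hasSum_toReal_passageMass_stepLaw (hb : ∀ n, 0 ≤ b n) (hb1 : HasSum b 1)
    (hμ : HasSum (fun n => n * b n) m) (hα0 : 0 < α) (hα1 : α < 1) (hαm : α * m ≤ 1 - α)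
    (hb0 : 0 < b 0) (hzf : SolvesKernelEquation α b zf) (x : ℕ) :
    HasSum (fun n => (passageMass (stepLaw α b) x n).toReal) 1 := by
  have hrec := tsum_passageMass_stepLaw_eq_one hb hb1 hμ hα0 hα1 hαm hb0 hzf x
  have h := (ENNReal.summable_toReal (hrec ▸ ENNReal.one_ne_top)).hasSum
  rwa [← ENNReal.tsum_toReal_eq fun n =>
    ne_top_of_le_ne_top ENNReal.one_ne_top (hrec ▸ ENNReal.le_tsum n), hrec,
    ENNReal.toReal_one] at h

theorem hasSum_pow_mul_toReal_passageMass_stepLaw (hb : ∀ n, 0 ≤ b n) (hb1 : HasSum b 1)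
    (hμ : HasSum (fun n => n * b n) m) (hα0 : 0 < α) (hα1 : α < 1) (hαm : α * m ≤ 1 - α)
    (hb0 : 0 < b 0) (hzf : SolvesKernelEquation α b zf) {x : ℕ} (hx : x ≠ 0) {u : ℝ}
    (hu : u ∈ Icc (0 : ℝ) 1) :
    HasSum (fun n => u ^ n * (passageMass (stepLaw α b) x n).toReal)
      (zf u ^ x * returnPGF α (b 0) u (zf u)) := by
  have hc := hasSum_toReal_passageMass_stepLaw hb hb1 hμ hα0 hα1 hαm hb0 hzf x
  obtain ⟨hzu, heq⟩ := hzf u hu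
  have hz : zf u ∈ Icc (0 : ℝ) 1 := ⟨by linarith [hzu.1], hzu.2⟩
  rcases hu.2.lt_or_eq with hu1 | rfl
  · have h := (hc.summable.of_nonneg_of_le
      (fun n => mul_nonneg (pow_nonneg hu.1 n) ENNReal.toReal_nonneg)
      fun n => mul_le_of_le_one_left ENNReal.toReal_nonneg (pow_le_one₀ hu.1 hu.2)).hasSum
    rwa [← toReal_passagePGF (tsum_stepLaw hα0 hα1 hb hb1).le hu.1,
      passagePGF_stepLaw hα0 hα1 hb hb1 hb0 hu.1 hu1 hz heq,
      ENNReal.toReal_ofReal (hittingPGF_mem_Icc hα0.le hα1 hb0.le hu.1 hz.1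
        (root_lt_one hb1 hα0 hu1 hz.2 heq) x).1, hittingPGF, if_neg hx] at h
  · rw [root_eq_one hb hb1 hμ hα0 hα1 hαm hz heq]
    simpa [returnPGF, (mul_pos hα0 hb0).ne'] using hc

theorem hasSum_nat_mul_toReal_passageMass_stepLaw (hb : ∀ n, 0 ≤ b n) (hb1 : HasSum b 1)
    (hμ : HasSum (fun n => n * b n) m) (hα0 : 0 < α) (hα1 : α < 1) (hαm : α * m < 1 - α)
    (hb0 : 0 < b 0) (hzf : SolvesKernelEquation α b zf) {x : ℕ} (hx : x ≠ 0) :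
    HasSum (fun n => n * (passageMass (stepLaw α b) x n).toReal)
      ((b 0 * x + (1 - α) / α) / (b 0 * ((1 - α) / α - m))) :=
  hasSum_nat_mul_of_tendsto_one_sub_div (fun _ => ENNReal.toReal_nonneg)
    (hasSum_toReal_passageMass_stepLaw hb hb1 hμ hα0 hα1 hαm.le hb0 hzf x)
    ((tendsto_one_sub_hittingPGF_div hb hb1 hμ hα0 hα1 hαm hb0 hzf hx).congr' (by
      filter_upwards [Ioo_mem_nhdsLT one_pos] with u hu
      rw [(hasSum_pow_mul_toReal_passageMass_stepLaw hb hb1 hμ hα0 hα1 hαm.le hb0 hzf hx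
        ⟨hu.1.le, hu.2.le⟩).tsum_eq, hittingPGF, if_neg hx]))

end FirstPassageLaw

/-- Step `i` moves `X i` to `X (i + 1)`. -/
def steps {Ω : Type*} (δ β : ℕ → Ω → ℕ) (n : ℕ) (ω : Ω) : Fin n → ℕ × ℕ :=
  fun i => (δ (i + 1) ω, β (i + 1) ω)

/-- `sInf ∅ = 0`: this is also the value on paths that never reach `0`. -/
noncomputable def hittingTime {Ω : Type*} (X : ℕ → Ω → ℕ) (ω : Ω) : ℕ := sInf {n | X n ω = 0}

section Probability

variable {Ω : Type*} {δ β X : ℕ → Ω → ℕ} {x₀ : ℕ}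

theorem hittingTime_preimage_singleton (hX0 : ∀ ω, X 0 ω = x₀)
    (hXrec : ∀ n ω, X (n + 1) ω = X n ω - δ (n + 1) ω + β (n + 1) ω) {n : ℕ} (hn : n ≠ 0) :
    hittingTime X ⁻¹' {n} = steps δ β n ⁻¹' {v | FirstPassage n x₀ v} := by
  ext ω
  have h := firstPassage_iff (Y := fun k => X k ω) (s := fun k => (δ (k + 1) ω, β (k + 1) ω))
    (fun k => hXrec k ω) n
  rw [hX0 ω] at h
  exact (Nat.sInf_eq_iff_of_ne_zero hn).trans h.symm

variable [MeasurableSpace Ω] {μ : Measure Ω} {pδ pβ : ℕ → ℝ≥0∞}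

theorem measurable_steps (hmδ : ∀ n, Measurable (δ n)) (hmβ : ∀ n, Measurable (β n)) (n : ℕ) :
    Measurable (steps δ β n) :=
  measurable_pi_iff.2 fun _ => (hmδ _).prodMk (hmβ _)

theorem measure_steps_preimage_singleton (hind : iIndepFun (Sum.elim δ β) μ)
    (hδd : ∀ n x, μ {ω | δ n ω = x} = pδ x) (hβd : ∀ n x, μ {ω | β n ω = x} = pβ x) (n : ℕ)
    (v : Fin n → ℕ × ℕ) : μ (steps δ β n ⁻¹' {v}) = ∏ i, pδ (v i).1 * pβ (v i).2 := by
  let g : Fin n ⊕ Fin n → ℕ ⊕ ℕ := Sum.map (fun i => i + 1) (fun i => i + 1)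
  have hg : g.Injective := Sum.map_injective.2
    ⟨fun i j h => Fin.ext (by simpa using h), fun i j h => Fin.ext (by simpa using h)⟩
  let t : Fin n ⊕ Fin n → ℕ := Sum.elim (fun i => (v i).1) (fun i => (v i).2)
  have hset : steps δ β n ⁻¹' {v} = ⋂ i ∈ (Finset.univ : Finset (Fin n ⊕ Fin n)),
      (fun ω => Sum.elim δ β (g i) ω) ⁻¹' {t i} := by
    ext ω
    simp [steps, g, t, funext_iff, Prod.ext_iff, forall_and]
  rw [hset, (hind.precomp hg).measure_inter_preimage_eq_mul _ fun _ _ => measurableSet_singleton _,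
    Fintype.prod_sum_type, ← Finset.prod_mul_distrib]
  simp [g, t, Set.preimage, hδd, hβd]

theorem measure_steps_preimage (hmδ : ∀ n, Measurable (δ n)) (hmβ : ∀ n, Measurable (β n))
    (hind : iIndepFun (Sum.elim δ β) μ) (hδd : ∀ n x, μ {ω | δ n ω = x} = pδ x)
    (hβd : ∀ n x, μ {ω | β n ω = x} = pβ x) {n : ℕ} (s : Set (Fin n → ℕ × ℕ)) :
    μ (steps δ β n ⁻¹' s) = ∑' v, s.indicator (fun v => ∏ i, pδ (v i).1 * pβ (v i).2) v := by
  rw [← tsum_measure_preimage_singleton s.to_countable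
    fun v _ => measurable_steps hmδ hmβ n (measurableSet_singleton v), ← tsum_subtype]
  exact tsum_congr fun v => measure_steps_preimage_singleton hind hδd hβd n v

theorem measurable_hittingTime (hmδ : ∀ n, Measurable (δ n)) (hmβ : ∀ n, Measurable (β n))
    (hX0 : ∀ ω, X 0 ω = x₀) (hXrec : ∀ n ω, X (n + 1) ω = X n ω - δ (n + 1) ω + β (n + 1) ω) :
    Measurable (hittingTime X) := by
  have hmeas : ∀ n ≠ 0, MeasurableSet (hittingTime X ⁻¹' {n}) := fun n hn => by
    rw [hittingTime_preimage_singleton hX0 hXrec hn]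
    exact measurable_steps hmδ hmβ n (Set.to_countable _).measurableSet
  refine measurable_to_countable' fun n => ?_
  rcases eq_or_ne n 0 with rfl | hn
  · have h : hittingTime X ⁻¹' {0} = (⋃ n : ℕ, hittingTime X ⁻¹' {n + 1})ᶜ := by
      ext ω
      simp only [mem_preimage, mem_singleton_iff, mem_compl_iff, mem_iUnion, not_exists]
      exact ⟨fun h n hn => by omega,
        fun h => by_contra fun h' => h _ (Nat.succ_pred_eq_of_ne_zero h').symm⟩
    rw [h]
    exact (MeasurableSet.iUnion fun n => hmeas _ n.succ_ne_zero).compl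
  · exact hmeas n hn

theorem measure_hittingTime_preimage_singleton [IsProbabilityMeasure μ]
    (hmδ : ∀ n, Measurable (δ n)) (hmβ : ∀ n, Measurable (β n))
    (hind : iIndepFun (Sum.elim δ β) μ) (hδd : ∀ n x, μ {ω | δ n ω = x} = pδ x)
    (hβd : ∀ n x, μ {ω | β n ω = x} = pβ x) (hX0 : ∀ ω, X 0 ω = x₀)
    (hXrec : ∀ n ω, X (n + 1) ω = X n ω - δ (n + 1) ω + β (n + 1) ω) (hx₀ : x₀ ≠ 0)
    (hrec : ∑' n, passageMass (fun s => pδ s.1 * pβ s.2) x₀ n = 1) (n : ℕ) :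
    μ (hittingTime X ⁻¹' {n}) = passageMass (fun s => pδ s.1 * pβ s.2) x₀ n := by
  have hpos : ∀ n ≠ 0, μ (hittingTime X ⁻¹' {n}) = passageMass (fun s => pδ s.1 * pβ s.2) x₀ n :=
    fun n hn => by
      rw [hittingTime_preimage_singleton hX0 hXrec hn, measure_steps_preimage hmδ hmβ hind hδd hβd]
      exact tsum_indicator_firstPassage (fun s => pδ s.1 * pβ s.2) n x₀
  rcases eq_or_ne n 0 with rfl | hn
  -- As `x₀ ≠ 0`, `hittingTime = 0` only on paths that never reach `0`; they are null by `hrec`.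
  · have htot := lintegral_comp_eq_tsum (μ := μ) (measurable_hittingTime hmδ hmβ hX0 hXrec) 1
    simp only [Pi.one_apply, lintegral_const, measure_univ, one_mul] at htot
    rw [tsum_eq_zero_add' ENNReal.summable, tsum_congr fun n => hpos (n + 1) n.succ_ne_zero,
      ← zero_add (∑' n, _), ← passageMass_zero_right hx₀, ← tsum_eq_zero_add' ENNReal.summable,
      hrec] at htot
    rw [passageMass_zero_right hx₀]
    exact (ENNReal.add_left_inj ENNReal.one_ne_top).1 (by rw [zero_add]; exact htot.symm)
  · exact hpos n hn

end Probability

end DeathBirth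

open DeathBirth in
theorem stmt15_general {Ω : Type*} [MeasurableSpace Ω] (μ : Measure Ω) [IsProbabilityMeasure μ]
    (α : ℝ) (hα0 : 0 < α) (hα1 : α < 1)
    (b : ℕ → ℝ) (hbnn : ∀ n, 0 ≤ b n) (hbsum : HasSum b 1)
    (hb00 : 0 < b 0)
    (μβ : ℝ) (hμβ : HasSum (fun n : ℕ => (n : ℝ) * b n) μβ)
    (hrec : μβ ≤ (1 - α) / α)
    (x₀ : ℕ) (hx₀ : 1 ≤ x₀)
    (δ β : ℕ → Ω → ℕ) (X : ℕ → Ω → ℕ)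
    (hmδ : ∀ n, Measurable (δ n)) (hmβ : ∀ n, Measurable (β n))
    (hX0 : ∀ ω, X 0 ω = x₀)
    (hXrec : ∀ n ω, X (n + 1) ω = (X n ω - δ (n + 1) ω) + β (n + 1) ω)
    (hδd : ∀ n x, μ {ω | δ n ω = x} = ENNReal.ofReal (α * (1 - α) ^ x))
    (hβd : ∀ n x, μ {ω | β n ω = x} = ENNReal.ofReal (b x))
    (hindep : iIndepFun (Sum.elim δ β) μ)
    (φβ zfun : ℝ → ℝ)
    (hφβ : ∀ z, φβ z = ∑' n : ℕ, b n * z ^ n)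
    (hzfun : ∀ u ∈ Icc (0 : ℝ) 1, zfun u ∈ Icc (1 - α) 1 ∧
      zfun u - (1 - α) = u * (α * zfun u * φβ (zfun u))) :
    (∀ u ∈ Icc (0 : ℝ) 1,
      ∫ ω, u ^ (sInf {n : ℕ | X n ω = 0}) ∂μ =
        zfun u ^ x₀ *
          (α * b 0 * u * zfun u / (α * b 0 * u * zfun u + (1 - α) * (1 - zfun u)))) ∧
    (μβ < (1 - α) / α →
      ∫ ω, ((sInf {n : ℕ | X n ω = 0} : ℕ) : ℝ) ∂μ =
        (b 0 * x₀ + (1 - α) / α) / (b 0 * ((1 - α) / α - μβ))) := by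
  obtain rfl : φβ = pgf b := funext hφβ
  have hx₀0 : x₀ ≠ 0 := by omega
  have hαμ : α * μβ ≤ 1 - α := by rwa [le_div_iff₀ hα0, mul_comm] at hrec
  have hτ := measurable_hittingTime hmδ hmβ hX0 hXrec
  have hrecur := tsum_passageMass_stepLaw_eq_one hbnn hbsum hμβ hα0 hα1 hαμ hb00 hzfun x₀
  have hlaw : ∀ n, μ.real (hittingTime X ⁻¹' {n}) = (passageMass (stepLaw α b) x₀ n).toReal :=
    fun n => congrArg ENNReal.toReal (measure_hittingTime_preimage_singleton hmδ hmβ hindep hδd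
      hβd hX0 hXrec hx₀0 hrecur n)
  refine ⟨fun u hu => ?_, fun hlt => ?_⟩
  · refine integral_comp_of_hasSum (f := fun n => u ^ n) hτ (fun n => pow_nonneg hu.1 n) ?_
    simpa only [hlaw, returnPGF] using
      hasSum_pow_mul_toReal_passageMass_stepLaw hbnn hbsum hμβ hα0 hα1 hαμ hb00 hzfun hx₀0 hu
  · refine integral_comp_of_hasSum (f := fun n => (n : ℝ)) hτ (fun n => n.cast_nonneg) ?_
    simpa only [hlaw] using hasSum_nat_mul_toReal_passageMass_stepLaw hbnn hbsum hμβ hα0 hα1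
      (by rwa [lt_div_iff₀ hα0, mul_comm] at hlt) hb00 hzfun hx₀0

/-- Recurrent regime: the first hitting time of 0 from `x₀ ≥ 1` satisfies
`E(u^{τ_{x₀,0}}) = z(u)^{x₀} E(u^{τ_{0,0}})`, with
`E(u^{τ_{0,0}}) = αb₀uz(u)/(αb₀uz(u)+ᾱ(1-z(u)))` — i.e. `τ_{x₀,0}` is distributed
as the independent sum of `τ_{0,0}` and `x₀` i.i.d. copies with p.g.f. `z(u)` —
and, in the positive recurrent case `μ_β < μ_δ`,
`E(τ_{x₀,0}) = (b₀x₀ + μ_δ)/(b₀(μ_δ - μ_β))`. -/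
theorem stmt15 {Ω : Type*} [MeasurableSpace Ω] (μ : Measure Ω) [IsProbabilityMeasure μ]
    (α : ℝ) (hα0 : 0 < α) (hα1 : α < 1)
    (b : ℕ → ℝ) (hbnn : ∀ n, 0 ≤ b n) (hbsum : HasSum b 1)
    (hb00 : 0 < b 0) (hb01 : b 0 < 1)
    (μβ : ℝ) (hμβ : HasSum (fun n : ℕ => (n : ℝ) * b n) μβ)
    (hrec : μβ ≤ (1 - α) / α)
    (x₀ : ℕ) (hx₀ : 1 ≤ x₀)
    (δ β : ℕ → Ω → ℕ) (X : ℕ → Ω → ℕ)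
    (hmδ : ∀ n, Measurable (δ n)) (hmβ : ∀ n, Measurable (β n)) (hmX : ∀ n, Measurable (X n))
    (hX0 : ∀ ω, X 0 ω = x₀)
    (hXrec : ∀ n ω, X (n + 1) ω = (X n ω - δ (n + 1) ω) + β (n + 1) ω)
    (hδd : ∀ n x, μ {ω | δ n ω = x} = ENNReal.ofReal (α * (1 - α) ^ x))
    (hβd : ∀ n x, μ {ω | β n ω = x} = ENNReal.ofReal (b x))
    (hindep : iIndepFun (Sum.elim δ β) μ)
    (φβ zfun : ℝ → ℝ)
    (hφβ : ∀ z, φβ z = ∑' n : ℕ, b n * z ^ n)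
    (hzfun : ∀ u ∈ Icc (0 : ℝ) 1, zfun u ∈ Icc (1 - α) 1 ∧
      zfun u - (1 - α) = u * (α * zfun u * φβ (zfun u))) :
    (∀ u ∈ Icc (0 : ℝ) 1,
      ∫ ω, u ^ (sInf {n : ℕ | X n ω = 0}) ∂μ =
        zfun u ^ x₀ *
          (α * b 0 * u * zfun u / (α * b 0 * u * zfun u + (1 - α) * (1 - zfun u)))) ∧
    (μβ < (1 - α) / α →
      ∫ ω, ((sInf {n : ℕ | X n ω = 0} : ℕ) : ℝ) ∂μ =
        (b 0 * x₀ + (1 - α) / α) / (b 0 * ((1 - α) / α - μβ))) :=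
  stmt15_general μ α hα0 hα1 b hbnn hbsum hb00 μβ hμβ hrec x₀ hx₀ δ β X hmδ hmβ hX0 hXrec hδd hβd
    hindep φβ zfun hφβ hzfun
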